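/- arXiv:1803.07239 — 6 statements merged into one kernel-verified Lean document; each statement's English description precedes it below -/
import Mathlib

section
/- Let H be a finite dimensional Hopf algebra and α, β Hopf automorphisms. The diagonal crossed product A ⋈ B_(α,β) = H* ⊗ H with product (p ⋈ h)(q ⋈ l) = Σ p(α(h₁) ▶ q ◀ S⁻¹β(h₃)) ⋈ h₂ l is a unital associative algebra with unit ε ⋈ 1, and the maps p ↦ p ⋈ 1 and h ↦ ε ⋈ h are injective algebra homomorphisms from H* and H respectively. -/
open TensorProduct LinearMap

noncomputable section

namespace DCP

variable (K : Type) {H : Type} [Field K] [Ring H] [HopfAlgebra K H]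

/-- A Hopf algebra automorphism: a linear equivalence that is an algebra morphism and a
coalgebra morphism. -/
def IsHopfAut (f : H ≃ₗ[K] H) : Prop :=
  (∀ x y : H, f (x * y) = f x * f y) ∧ f 1 = 1 ∧
    (Coalgebra.comul ∘ₗ f.toLinearMap
      = TensorProduct.map f.toLinearMap f.toLinearMap ∘ₗ Coalgebra.comul) ∧
    (Coalgebra.counit ∘ₗ f.toLinearMap = (Coalgebra.counit : H →ₗ[K] K))

/-- The convolution product on the dual of `H`, as a bilinear map. -/
def convMul : Module.Dual K H →ₗ[K] Module.Dual K H →ₗ[K] Module.Dual K H :=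
  (TensorProduct.mapBilinear (RingHom.id K) H H K K).compr₂
    ((LinearMap.lcomp K K (Coalgebra.comul (R := K) (A := H))) ∘ₗ
      (LinearMap.llcomp K (H ⊗[K] H) (K ⊗[K] K) K (TensorProduct.lid K K).toLinearMap))

@[simp] lemma convMul_apply (p q : Module.Dual K H) (x : H) :
    convMul K p q x = (TensorProduct.lid K K).toLinearMap
      (TensorProduct.map p q (Coalgebra.comul x)) := rfl

/-- The coproduct on the dual of a finite-dimensional Hopf algebra, dual to multiplication. -/
def dcomul [FiniteDimensional K H] :
    Module.Dual K H →ₗ[K] Module.Dual K H ⊗[K] Module.Dual K H :=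
  (TensorProduct.dualDistribEquiv K H H).symm.toLinearMap ∘ₗ (LinearMap.mul' K H).dualMap

/-- The iterated comultiplication `h ↦ h₁ ⊗ (h₂ ⊗ h₃)`. -/
def comul2 : H →ₗ[K] H ⊗[K] (H ⊗[K] H) :=
  (LinearMap.lTensor H (Coalgebra.comul (R := K))) ∘ₗ Coalgebra.comul

/-- Lift a trilinear map to the triple tensor product `H ⊗ (H ⊗ H)`. -/
def lift3 {W : Type} [AddCommMonoid W] [Module K W]
    (Φ : H →ₗ[K] H →ₗ[K] H →ₗ[K] W) : H ⊗[K] (H ⊗[K] H) →ₗ[K] W :=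
  TensorProduct.lift ((TensorProduct.lift.equiv (RingHom.id K) H H W).toLinearMap ∘ₗ Φ)

variable {K}

/-- auxiliary linear map `h₃ ↦ F (p ∘ mulLeft (u h₃) ∘ mulRight (v h₁)) ⊗ g h₂`. -/
def inner3 (u : H →ₗ[K] H) (F : Module.Dual K H →ₗ[K] Module.Dual K H)
    (p : Module.Dual K H) (a g2 : H) : H →ₗ[K] Module.Dual K H ⊗[K] H :=
  ((TensorProduct.mk K (Module.Dual K H) H).flip g2) ∘ₗ F ∘ₗ
    (LinearMap.llcomp K H H K p) ∘ₗ
    ((LinearMap.llcomp K H H H).flip (LinearMap.mulRight K a)) ∘ₗ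
    ((LinearMap.mul K H) ∘ₗ u)

@[simp] lemma inner3_apply (u : H →ₗ[K] H) (F : Module.Dual K H →ₗ[K] Module.Dual K H)
    (p : Module.Dual K H) (a g2 h₃ : H) :
    inner3 u F p a g2 h₃
      = F (p ∘ₗ LinearMap.mulLeft K (u h₃) ∘ₗ LinearMap.mulRight K a) ⊗ₜ[K] g2 := by
  rfl

variable (K)

/-- The curried trilinear map
`(h₁, h₂, h₃) ↦ F (p ∘ mulLeft (u h₃) ∘ mulRight (v h₁)) ⊗ g h₂`. -/
def coreTri (u v : H →ₗ[K] H) (F : Module.Dual K H →ₗ[K] Module.Dual K H)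
    (g : H →ₗ[K] H) (p : Module.Dual K H) :
    H →ₗ[K] H →ₗ[K] H →ₗ[K] Module.Dual K H ⊗[K] H :=
  LinearMap.mk₂ K (fun h₁ h₂ => inner3 u F p (v h₁) (g h₂))
    (fun m m' n => by
      have hR : ∀ a b : H, LinearMap.mulRight K (a + b)
          = LinearMap.mulRight K a + LinearMap.mulRight K b := by
        intro a b; ext x; simp [mul_add]
      ext h₃
      simp [hR, LinearMap.comp_add, LinearMap.add_comp, map_add, add_tmul])
    (fun c m n => by
      have hR : ∀ a : H, LinearMap.mulRight K ((c : K) • a)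
          = c • LinearMap.mulRight K a := by
        intro a; ext x; simp [mul_smul_comm]
      ext h₃
      simp [hR, LinearMap.comp_smul, LinearMap.smul_comp, map_smul, smul_tmul'])
    (fun m n n' => by
      ext h₃
      simp [map_add, tmul_add])
    (fun c m n => by
      ext h₃
      simp [map_smul, tmul_smul])

/-- The diagonal crossed product of pure tensors:
`(p ⋈ h)(q ⋈ l) = Σ p (α(h₁) ▶ q ◀ S⁻¹β(h₃)) ⋈ h₂ l`. -/
def dprod (α β Sinv : H →ₗ[K] H) (p : Module.Dual K H) (h : H)
    (q : Module.Dual K H) (l : H) : Module.Dual K H ⊗[K] H :=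
  lift3 K (coreTri K (Sinv ∘ₗ β) α (convMul K p) (LinearMap.mulRight K l) q) (comul2 K h)

/-- The value of the antipode of the diagonal crossed product on a pure tensor. -/
def smapVal (α β Sinv : H →ₗ[K] H) (p : Module.Dual K H) (h : H) :
    Module.Dual K H ⊗[K] H :=
  lift3 K (coreTri K (Sinv ∘ₗ β ∘ₗ HopfAlgebra.antipode (R := K))
      (Sinv ∘ₗ α) Sinv.dualMap
      (α ∘ₗ β ∘ₗ HopfAlgebra.antipode (R := K)) p) (comul2 K h)

/-- Componentwise product on a tensor product of two (nonunital) algebras given by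
bilinear multiplications. -/
def tmul₂ {A B : Type} [AddCommMonoid A] [Module K A] [AddCommMonoid B] [Module K B]
    (M1 : A →ₗ[K] A →ₗ[K] A) (M2 : B →ₗ[K] B →ₗ[K] B) :
    A ⊗[K] B →ₗ[K] A ⊗[K] B →ₗ[K] A ⊗[K] B :=
  (TensorProduct.homTensorHomMap (RingHom.id K) A B A B) ∘ₗ (TensorProduct.map M1 M2)

/-- The comultiplication component `Δ_{(α,β),(γ,δ)}(p ⋈ h) = Σ (p₂ ⋈ c h₁) ⊗ (p₁ ⋈ e h₂)`
(with `c = γ`, `e = γ⁻¹βγ`). -/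
def deltaComp [FiniteDimensional K H] (c e : H →ₗ[K] H) :
    Module.Dual K H ⊗[K] H →ₗ[K]
      (Module.Dual K H ⊗[K] H) ⊗[K] (Module.Dual K H ⊗[K] H) :=
  (TensorProduct.tensorTensorTensorComm K (Module.Dual K H) (Module.Dual K H) H H).toLinearMap ∘ₗ
    TensorProduct.map
      ((TensorProduct.comm K (Module.Dual K H) (Module.Dual K H)).toLinearMap ∘ₗ dcomul K)
      (TensorProduct.map c e ∘ₗ Coalgebra.comul)

/-- The crossing map `ξ_(a,b)^(c,·)(p ⋈ h) = (p ∘ b a⁻¹) ⋈ a c⁻¹ b⁻¹ c (h)`. -/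
def xiMap (a b c : H ≃ₗ[K] H) :
    Module.Dual K H ⊗[K] H →ₗ[K] Module.Dual K H ⊗[K] H :=
  TensorProduct.map ((b.toLinearMap ∘ₗ a.symm.toLinearMap).dualMap)
    (a.toLinearMap ∘ₗ c.symm.toLinearMap ∘ₗ b.symm.toLinearMap ∘ₗ c.toLinearMap)

/-- Embedding of the dual into the crossed product, `p ↦ p ⋈ 1`. -/
def toD1 : Module.Dual K H →ₗ[K] Module.Dual K H ⊗[K] H :=
  (TensorProduct.mk K (Module.Dual K H) H).flip 1

/-- Embedding of `H` into the crossed product, `h ↦ ε ⋈ h`. -/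
def toD2 : H →ₗ[K] Module.Dual K H ⊗[K] H :=
  TensorProduct.mk K (Module.Dual K H) H (Coalgebra.counit (R := K))

end DCP

/-!
`H*` is a module algebra over `H ⊗ H`, acting by `(a ⊗ b) · q = q (S⁻¹β(b) * _ * α(a))`, for the
comultiplication `(a ⊗ b) ↦ (a₁ ⊗ b₂) ⊗ (a₂ ⊗ b₁)` of `H ⊗ Hᶜᵒᵖ`, and `h ↦ (h₁ ⊗ h₃) ⊗ h₂` makes `H`
a comodule algebra over the same algebra and coalgebra. The diagonal crossed product is the smash
product `(a ⊗ c)(a' ⊗ c') = Σ a (c₍₋₁₎ · a') ⊗ c₍₀₎ c'` of these data.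

Left multiplication `L (a ⊗ c)` is `(a * _) ⊗ id` composed with
`Ξ c : a' ⊗ c' ↦ Σ c₍₋₁₎ · a' ⊗ c₍₀₎ c'`, and `Ξ` is multiplicative because the action and the
coaction are. Associativity, `L (x y) = L x ∘ L y`, then reduces to the commutation relation
`L (Ξ c (a' ⊗ 1)) = Ξ c ∘ ((a' * _) ⊗ id)`, which is the module algebra identity combined with
coassociativity of the coaction.

The Hopf algebra input is that `S⁻¹` is an anti-algebra and anti-coalgebra map; the latter holds
because `Δ ∘ S` and `(S ⊗ S) ∘ τ ∘ Δ` are both convolution inverses of `Δ`.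
-/

open Coalgebra WithConv

namespace SmashProduct

variable {K A B C : Type*} [CommRing K] [AddCommGroup A] [Module K A]
  [Ring B] [Algebra K B] [Ring C] [Algebra K C]

variable (act : B →ₐ[K] Module.End K A)

def crossOp : B ⊗[K] C →ₐ[K] Module.End K (A ⊗[K] C) :=
  Algebra.TensorProduct.lift ((Module.End.rTensorAlgHom K A C).comp act)
    ((Module.End.lTensorAlgHom K C A).comp (Algebra.lmul K C)) fun _ _ =>
      (rTensor_comp_lTensor _ _ _).trans (lTensor_comp_rTensor _ _ _).symm

@[simp] lemma crossOp_tmul (b : B) (c : C) :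
    crossOp act (b ⊗ₜ c) = TensorProduct.map (act b) (LinearMap.mulLeft K c) :=
  rTensor_comp_lTensor _ _ _

variable (μ : A →ₗ[K] A →ₗ[K] A) (ρ : C →ₐ[K] B ⊗[K] C)

/-- The smash product `(a ⊗ c)(a' ⊗ c') = Σ μ a (c₍₋₁₎ · a') ⊗ c₍₀₎ c'`, where
`ρ c = Σ c₍₋₁₎ ⊗ c₍₀₎`, given by its left multiplication operators. -/
def smashMul : A ⊗[K] C →ₗ[K] A ⊗[K] C →ₗ[K] A ⊗[K] C :=
  TensorProduct.lift ((LinearMap.mul K (Module.End K (A ⊗[K] C))).compl₁₂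
    (LinearMap.rTensorHom C ∘ₗ μ) ((crossOp act).comp ρ).toLinearMap)

lemma smashMul_tmul (a : A) (c : C) :
    smashMul act μ ρ (a ⊗ₜ c) = rTensor C (μ a) * crossOp act (ρ c) := rfl

variable {act μ ρ}

lemma smashMul_rTensor (hμ : ∀ x y z, μ (μ x y) z = μ x (μ y z)) (a : A) (x : A ⊗[K] C) :
    smashMul act μ ρ (rTensor C (μ a) x) = rTensor C (μ a) * smashMul act μ ρ x := by
  induction x using TensorProduct.induction_on with
  | zero => simp
  | add x y hx hy => simp only [map_add, hx, hy, mul_add]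
  | tmul a' c' =>
    have : μ (μ a a') = μ a * μ a' := LinearMap.ext (hμ a a')
    simp only [rTensor_tmul, smashMul_tmul, this, rTensor_mul, mul_assoc]

lemma smashMul_lTensor_mulRight (c : C) (x : A ⊗[K] C) :
    smashMul act μ ρ (lTensor A (LinearMap.mulRight K c) x) =
      smashMul act μ ρ x * crossOp act (ρ c) := by
  induction x using TensorProduct.induction_on with
  | zero => simp
  | add x y hx hy => simp only [map_add, hx, hy, add_mul]
  | tmul a c' => simp [smashMul_tmul, mul_assoc]

lemma crossOp_tmul_eq_lTensor (t : B ⊗[K] C) (a : A) (c : C) :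
    crossOp act t (a ⊗ₜ c) = lTensor A (LinearMap.mulRight K c) (crossOp act t (a ⊗ₜ 1)) := by
  induction t using TensorProduct.induction_on with
  | zero => simp
  | add t t' ht ht' => simp only [map_add, LinearMap.add_apply, ht, ht']
  | tmul b c₀ => simp

lemma smashMul_crossOp_tmul_one (δ : B →ₗ[K] B ⊗[K] B)
    (hact : ∀ b x y, act b (μ x y) =
      TensorProduct.lift (μ.compl₁₂ (act.toLinearMap.flip x) (act.toLinearMap.flip y)) (δ b))
    (hρ : rTensor C δ ∘ₗ ρ.toLinearMap =
      (TensorProduct.assoc K B B C).symm.toLinearMap ∘ₗ lTensor B ρ.toLinearMap ∘ₗ ρ.toLinearMap)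
    (c : C) (a : A) :
    smashMul act μ ρ (crossOp act (ρ c) (a ⊗ₜ 1)) = crossOp act (ρ c) * rTensor C (μ a) := by
  refine TensorProduct.ext' fun a' c' => ?_
  -- On `a' ⊗ c'` the two sides are `Γ` of the two sides of the coassociativity of `ρ`.
  set Γ := TensorProduct.map
    (TensorProduct.lift (μ.compl₁₂ (act.toLinearMap.flip a) (act.toLinearMap.flip a')))
    (LinearMap.mulRight K c')
  have hL : ∀ t, smashMul act μ ρ (crossOp act t (a ⊗ₜ 1)) (a' ⊗ₜ c') =
      Γ ((TensorProduct.assoc K B B C).symm (lTensor B ρ.toLinearMap t)) := by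
    intro t
    induction t using TensorProduct.induction_on with
    | zero => simp
    | add t t' ht ht' => simp only [map_add, LinearMap.add_apply, ht, ht']
    | tmul b c₀ =>
      have key : ∀ t', rTensor C (μ (act b a)) (crossOp act t' (a' ⊗ₜ c')) =
          Γ ((TensorProduct.assoc K B B C).symm (b ⊗ₜ t')) := by
        intro t'
        induction t' using TensorProduct.induction_on with
        | zero => simp
        | add t t' ht ht' => simp only [map_add, LinearMap.add_apply, tmul_add, ht, ht']
        | tmul b' c₁ => simp [Γ]
      simpa [smashMul_tmul] using key (ρ c₀)
  have hR : ∀ t, crossOp act t (μ a a' ⊗ₜ c') = Γ (rTensor C δ t) := by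
    intro t
    induction t using TensorProduct.induction_on with
    | zero => simp
    | add t t' ht ht' => simp only [map_add, LinearMap.add_apply, ht, ht']
    | tmul b c₀ => simp [Γ, hact]
  calc smashMul act μ ρ (crossOp act (ρ c) (a ⊗ₜ 1)) (a' ⊗ₜ c')
      = Γ ((TensorProduct.assoc K B B C).symm (lTensor B ρ.toLinearMap (ρ c))) := hL _
    _ = Γ (rTensor C δ (ρ c)) := by
      have := LinearMap.congr_fun hρ c
      simp only [LinearMap.comp_apply, AlgHom.toLinearMap_apply, LinearEquiv.coe_coe] at this
      rw [this]
    _ = _ := (hR _).symm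

theorem smashMul_assoc (hμ : ∀ x y z, μ (μ x y) z = μ x (μ y z)) (δ : B →ₗ[K] B ⊗[K] B)
    (hact : ∀ b x y, act b (μ x y) =
      TensorProduct.lift (μ.compl₁₂ (act.toLinearMap.flip x) (act.toLinearMap.flip y)) (δ b))
    (hρ : rTensor C δ ∘ₗ ρ.toLinearMap =
      (TensorProduct.assoc K B B C).symm.toLinearMap ∘ₗ lTensor B ρ.toLinearMap ∘ₗ ρ.toLinearMap)
    (x y z : A ⊗[K] C) :
    smashMul act μ ρ (smashMul act μ ρ x y) z = smashMul act μ ρ x (smashMul act μ ρ y z) := by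
  have hcross (c : C) (y : A ⊗[K] C) :
      smashMul act μ ρ (crossOp act (ρ c) y) = crossOp act (ρ c) * smashMul act μ ρ y := by
    induction y using TensorProduct.induction_on with
    | zero => simp
    | add y y' hy hy' => simp only [map_add, hy, hy', mul_add]
    | tmul a c' =>
      rw [crossOp_tmul_eq_lTensor, smashMul_lTensor_mulRight,
        smashMul_crossOp_tmul_one δ hact hρ, smashMul_tmul, mul_assoc]
  suffices h : smashMul act μ ρ (smashMul act μ ρ x y) = smashMul act μ ρ x * smashMul act μ ρ y by
    rw [h, Module.End.mul_apply]
  induction x using TensorProduct.induction_on with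
  | zero => simp
  | add x x' hx hx' => simp only [map_add, LinearMap.add_apply, hx, hx', add_mul]
  | tmul a c =>
    rw [smashMul_tmul, Module.End.mul_apply, smashMul_rTensor hμ, hcross, mul_assoc]

lemma smashMul_tmul_one_tmul_one (a a' : A) :
    smashMul act μ ρ (a ⊗ₜ 1) (a' ⊗ₜ 1) = μ a a' ⊗ₜ 1 := by
  simp [smashMul_tmul]

lemma smashMul_unit_left {e : A} (he : μ e = LinearMap.id) (x : A ⊗[K] C) :
    smashMul act μ ρ (e ⊗ₜ 1) x = x := by
  simp [smashMul_tmul, he]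

lemma crossOp_unit_tmul {e : A} {ε : B →ₗ[K] K} (hact : ∀ b, act b e = ε b • e)
    (hρ : ∀ c, TensorProduct.lid K C (rTensor C ε (ρ c)) = c) (c c' : C) :
    crossOp act (ρ c) (e ⊗ₜ c') = e ⊗ₜ (c * c') := by
  have key : ∀ t, crossOp act t (e ⊗ₜ c') = e ⊗ₜ (TensorProduct.lid K C (rTensor C ε t) * c') := by
    intro t
    induction t using TensorProduct.induction_on with
    | zero => simp
    | add t t' ht ht' => simp only [map_add, LinearMap.add_apply, ht, ht', add_mul, tmul_add]
    | tmul b c₀ => simp [hact, smul_tmul]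
  rw [key, hρ]

lemma smashMul_unit_right {e : A} {ε : B →ₗ[K] K} (he : ∀ a, μ a e = a)
    (hact : ∀ b, act b e = ε b • e) (hρ : ∀ c, TensorProduct.lid K C (rTensor C ε (ρ c)) = c)
    (x : A ⊗[K] C) : smashMul act μ ρ x (e ⊗ₜ 1) = x := by
  induction x using TensorProduct.induction_on with
  | zero => simp
  | add x x' hx hx' => simp only [map_add, LinearMap.add_apply, hx, hx']
  | tmul a c => simp [smashMul_tmul, crossOp_unit_tmul hact hρ, he]

lemma smashMul_unit_tmul_unit_tmul {e : A} {ε : B →ₗ[K] K} (he : μ e = LinearMap.id)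
    (hact : ∀ b, act b e = ε b • e) (hρ : ∀ c, TensorProduct.lid K C (rTensor C ε (ρ c)) = c)
    (c c' : C) : smashMul act μ ρ (e ⊗ₜ c) (e ⊗ₜ c') = e ⊗ₜ (c * c') := by
  rw [smashMul_tmul, Module.End.mul_apply, crossOp_unit_tmul hact hρ, he, rTensor_id_apply]

end SmashProduct

namespace HopfAlgebra

variable {K H A : Type*} [CommRing K] [Ring H] [HopfAlgebra K H] [Ring A] [Algebra K A]

local notation "𝑺" => HopfAlgebra.antipode K (A := H)

lemma toConv_comp_antipode_mul (f : H →ₐ[K] A) :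
    toConv (f.toLinearMap ∘ₗ 𝑺) * toConv f.toLinearMap = 1 := by
  have h := LinearMap.algHom_comp_convMul_distrib f (toConv 𝑺) (toConv LinearMap.id)
  rw [LinearMap.antipode_mul_id, ofConv_toConv, ofConv_toConv, LinearMap.comp_id] at h
  apply WithConv.ofConv_injective
  rw [← h]
  ext x
  simp

/- `Δ = i₁ * i₂` for the two inclusions `H → H ⊗ H`, so `(S ⊗ S) ∘ τ ∘ Δ = (i₂ ∘ S) * (i₁ ∘ S)` is
a left convolution inverse of `Δ`, while `Δ ∘ S` is a right one. -/
theorem comul_comp_antipode :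
    comul ∘ₗ 𝑺 = map 𝑺 𝑺 ∘ₗ (TensorProduct.comm K H H).toLinearMap ∘ₗ comul := by
  let i₁ : H →ₐ[K] H ⊗[K] H := Algebra.TensorProduct.includeLeft
  let i₂ : H →ₐ[K] H ⊗[K] H := Algebra.TensorProduct.includeRight
  have hδ : toConv (comul : H →ₗ[K] H ⊗[K] H) =
      toConv i₁.toLinearMap * toConv i₂.toLinearMap := by
    apply WithConv.ofConv_injective
    have : mul' K (H ⊗[K] H) ∘ₗ map i₁.toLinearMap i₂.toLinearMap = LinearMap.id := by
      ext a b; simp [i₁, i₂]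
    simp only [LinearMap.convMul_def, ofConv_toConv]
    rw [← LinearMap.comp_assoc, this, LinearMap.id_comp]
  have hG : toConv (map 𝑺 𝑺 ∘ₗ (TensorProduct.comm K H H).toLinearMap ∘ₗ comul) =
      toConv (i₂.toLinearMap ∘ₗ 𝑺) * toConv (i₁.toLinearMap ∘ₗ 𝑺) := by
    apply WithConv.ofConv_injective
    have : mul' K (H ⊗[K] H) ∘ₗ map (i₂.toLinearMap ∘ₗ 𝑺) (i₁.toLinearMap ∘ₗ 𝑺) =
        map 𝑺 𝑺 ∘ₗ (TensorProduct.comm K H H).toLinearMap := by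
      ext a b; simp [i₁, i₂]
    simp only [LinearMap.convMul_def, ofConv_toConv]
    rw [← LinearMap.comp_assoc, ← this, LinearMap.comp_assoc]
  symm
  apply WithConv.toConv_injective
  refine left_inv_eq_right_inv (a := toConv comul) ?_ LinearMap.comul_right_inv
  rw [hG, hδ, mul_assoc, ← mul_assoc (toConv (i₁.toLinearMap ∘ₗ 𝑺)),
    toConv_comp_antipode_mul, one_mul, toConv_comp_antipode_mul]

variable {Sinv : H →ₗ[K] H}

lemma inv_antipode_one (hS1 : Sinv ∘ₗ 𝑺 = LinearMap.id) : Sinv 1 = 1 := by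
  simpa using LinearMap.congr_fun hS1 1

lemma inv_antipode_mul (hS1 : Sinv ∘ₗ 𝑺 = LinearMap.id) (hS2 : 𝑺 ∘ₗ Sinv = LinearMap.id)
    (x y : H) : Sinv (x * y) = Sinv y * Sinv x := by
  have hS2' (z : H) : 𝑺 (Sinv z) = z := LinearMap.congr_fun hS2 z
  conv_lhs => rw [← hS2' x, ← hS2' y, ← antipode_mul_antidistrib]
  exact LinearMap.congr_fun hS1 _

lemma counit_inv_antipode (hS2 : 𝑺 ∘ₗ Sinv = LinearMap.id) (x : H) :
    counit (R := K) (Sinv x) = counit x := by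
  have h := counit_antipode (R := K) (Sinv x)
  rwa [show 𝑺 (Sinv x) = x from LinearMap.congr_fun hS2 x, eq_comm] at h

lemma comul_inv_antipode (hS1 : Sinv ∘ₗ 𝑺 = LinearMap.id) (hS2 : 𝑺 ∘ₗ Sinv = LinearMap.id)
    (x : H) : comul (R := K) (Sinv x) = map Sinv Sinv (TensorProduct.comm K H H (comul x)) := by
  have h := LinearMap.congr_fun (comul_comp_antipode (K := K) (H := H)) (Sinv x)
  rw [LinearMap.comp_apply, show 𝑺 (Sinv x) = x from LinearMap.congr_fun hS2 x] at h
  rw [h, LinearMap.comp_apply, LinearMap.comp_apply, map_comm, map_map, hS1, map_id,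
    LinearMap.id_apply, LinearEquiv.coe_coe, TensorProduct.comm_comm]

end HopfAlgebra

namespace DCP

section Coalgebra

variable {K H : Type*} [CommRing K] [AddCommGroup H] [Module K H] [Coalgebra K H]

lemma sum_counit_right_smul {ι : Type*} {a : H} (r : Repr K a ι) :
    ∑ i ∈ r.index, counit (R := K) (r.right i) • r.left i = a := by
  have h := congr(TensorProduct.rid K H $(sum_tmul_counit_eq r))
  simpa only [map_sum, rid_tmul, one_smul] using h

/-- The comultiplication of `H ⊗ Hᶜᵒᵖ`. -/
def comulTensorCop : H ⊗[K] H →ₗ[K] (H ⊗[K] H) ⊗[K] (H ⊗[K] H) :=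
  (TensorProduct.tensorTensorTensorComm K H H H H).toLinearMap ∘ₗ
    map comul ((TensorProduct.comm K H H).toLinearMap ∘ₗ comul)

end Coalgebra

section Bialgebra

variable (K H : Type*) [CommRing K] [Ring H] [Bialgebra K H]

/-- `h ↦ (h₁ ⊗ h₃) ⊗ h₂`. -/
def twoSidedCoaction : H →ₐ[K] (H ⊗[K] H) ⊗[K] H :=
  (Algebra.TensorProduct.assoc K K K H H H).symm.toAlgHom.comp
    ((Algebra.TensorProduct.map (AlgHom.id K H) (Algebra.TensorProduct.comm K H H).toAlgHom).comp
      ((Algebra.TensorProduct.map (AlgHom.id K H) (Bialgebra.comulAlgHom K H)).comp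
        (Bialgebra.comulAlgHom K H)))

variable {K H}

lemma twoSidedCoaction_toLinearMap : (twoSidedCoaction K H).toLinearMap =
    (TensorProduct.assoc K H H H).symm.toLinearMap ∘ₗ
      lTensor H (TensorProduct.comm K H H).toLinearMap ∘ₗ lTensor H comul ∘ₗ comul :=
  rfl

/- Both sides are permutations of iterated coproducts: `coassoc_simps` identifies the two coproduct
trees (which carry no flip), and the permutations are compared on pure tensors. -/
theorem twoSidedCoaction_coassoc :
    rTensor H comulTensorCop ∘ₗ (twoSidedCoaction K H).toLinearMap =
      (TensorProduct.assoc K (H ⊗[K] H) (H ⊗[K] H) H).symm.toLinearMap ∘ₗ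
        lTensor (H ⊗[K] H) (twoSidedCoaction K H).toLinearMap ∘ₗ
          (twoSidedCoaction K H).toLinearMap := by
  let D : H →ₗ[K] H ⊗[K] (H ⊗[K] H) := lTensor H comul ∘ₗ comul
  let ΩL : (H ⊗[K] H) ⊗[K] (H ⊗[K] (H ⊗[K] H)) →ₗ[K] ((H ⊗[K] H) ⊗[K] (H ⊗[K] H)) ⊗[K] H :=
    rTensor H ((TensorProduct.tensorTensorTensorComm K H H H H).toLinearMap ∘ₗ
        lTensor (H ⊗[K] H) (TensorProduct.comm K H H).toLinearMap) ∘ₗ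
      (TensorProduct.assoc K (H ⊗[K] H) (H ⊗[K] H) H).symm.toLinearMap ∘ₗ
      lTensor (H ⊗[K] H) (TensorProduct.comm K H (H ⊗[K] H)).toLinearMap
  let ΩR : H ⊗[K] ((H ⊗[K] (H ⊗[K] H)) ⊗[K] H) →ₗ[K] ((H ⊗[K] H) ⊗[K] (H ⊗[K] H)) ⊗[K] H :=
    (TensorProduct.assoc K (H ⊗[K] H) (H ⊗[K] H) H).symm.toLinearMap ∘ₗ
      lTensor (H ⊗[K] H) ((TensorProduct.assoc K H H H).symm.toLinearMap ∘ₗ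
        lTensor H (TensorProduct.comm K H H).toLinearMap) ∘ₗ
      (TensorProduct.assoc K H H (H ⊗[K] (H ⊗[K] H))).symm.toLinearMap ∘ₗ
      lTensor H (TensorProduct.comm K (H ⊗[K] (H ⊗[K] H)) H).toLinearMap
  let E : H ⊗[K] ((H ⊗[K] (H ⊗[K] H)) ⊗[K] H) →ₗ[K] (H ⊗[K] H) ⊗[K] (H ⊗[K] (H ⊗[K] H)) :=
    (TensorProduct.assoc K H H (H ⊗[K] (H ⊗[K] H))).symm.toLinearMap ∘ₗ
      lTensor H (lTensor H (TensorProduct.assoc K H H H).toLinearMap) ∘ₗ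
      lTensor H (TensorProduct.assoc K H (H ⊗[K] H) H).toLinearMap
  have hL : rTensor H comulTensorCop ∘ₗ (twoSidedCoaction K H).toLinearMap =
      ΩL ∘ₗ map comul (lTensor H comul) ∘ₗ D := by
    simp only [twoSidedCoaction_toLinearMap, D, ← LinearMap.comp_assoc]
    congr 2
    ext a b c
    simp [ΩL, comulTensorCop]
  have hR : (TensorProduct.assoc K (H ⊗[K] H) (H ⊗[K] H) H).symm.toLinearMap ∘ₗ
      lTensor (H ⊗[K] H) (twoSidedCoaction K H).toLinearMap ∘ₗ (twoSidedCoaction K H).toLinearMap =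
        ΩR ∘ₗ lTensor H (rTensor H D) ∘ₗ D := by
    simp only [twoSidedCoaction_toLinearMap, D, ← LinearMap.comp_assoc]
    congr 2
    ext a b c
    simp [ΩR]
  have hD : map comul (lTensor H comul) ∘ₗ D = E ∘ₗ lTensor H (rTensor H D) ∘ₗ D := by
    simp only [D, E, coassoc_simps]
  have hΩ : ΩL ∘ₗ E = ΩR := by
    ext a b c d e
    simp [ΩL, ΩR, E]
  rw [hL, hR, hD, ← hΩ]
  simp only [LinearMap.comp_assoc]

lemma twoSidedCoaction_counit (h : H) :
    TensorProduct.lid K H (rTensor H counit (twoSidedCoaction K H h)) = h := by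
  change TensorProduct.lid K H (rTensor H counit ((TensorProduct.assoc K H H H).symm
    (lTensor H (TensorProduct.comm K H H).toLinearMap (lTensor H comul (comul h))))) = h
  rw [← (ℛ K h).eq]
  simp only [map_sum, lTensor_tmul, ← (ℛ K _).eq, tmul_sum, LinearEquiv.coe_coe, comm_tmul,
    assoc_symm_tmul, rTensor_tmul, counit_tmul, smul_eq_mul, lid_tmul, mul_smul]
  refine (Finset.sum_congr rfl fun i _ => ?_).trans (sum_counit_smul (ℛ K h))
  conv_rhs => rw [← sum_counit_right_smul (ℛ K ((ℛ K h).right i)), Finset.smul_sum]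
  exact Finset.sum_congr rfl fun j _ => smul_comm _ _ _

def dualMulRight (f : H →ₐ[K] H) : H →ₐ[K] Module.End K (Module.Dual K H) :=
  AlgHom.ofLinearMap (Module.Dual.transpose ∘ₗ (LinearMap.mul K H).flip ∘ₗ f.toLinearMap)
    (by ext q x; simp [Module.Dual.transpose_apply])
    (fun a b => by ext q x; simp [Module.Dual.transpose_apply, mul_assoc])

def dualMulLeft (g : H →ₗ[K] H) (hg₁ : g 1 = 1) (hg : ∀ x y, g (x * y) = g y * g x) :
    H →ₐ[K] Module.End K (Module.Dual K H) :=
  AlgHom.ofLinearMap (Module.Dual.transpose ∘ₗ LinearMap.mul K H ∘ₗ g)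
    (by ext q x; simp [Module.Dual.transpose_apply, hg₁])
    (fun a b => by ext q x; simp [Module.Dual.transpose_apply, hg, mul_assoc])

variable (f : H →ₐ[K] H) (g : H →ₗ[K] H) (hg₁ : g 1 = 1) (hg : ∀ x y, g (x * y) = g y * g x)

def bimodAct : H ⊗[K] H →ₐ[K] Module.End K (Module.Dual K H) :=
  Algebra.TensorProduct.lift (dualMulRight f) (dualMulLeft g hg₁ hg) fun a b => by
    ext q x; simp [dualMulRight, dualMulLeft, Module.Dual.transpose_apply, mul_assoc]

lemma bimodAct_tmul (a b : H) (q : Module.Dual K H) :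
    bimodAct f g hg₁ hg (a ⊗ₜ b) q =
      q ∘ₗ LinearMap.mulLeft K (g b) ∘ₗ LinearMap.mulRight K (f a) :=
  rfl

variable {f g hg₁ hg}

lemma bimodAct_counit (hfε : ∀ x, counit (R := K) (f x) = counit x)
    (hgε : ∀ x, counit (R := K) (g x) = counit x) (t : H ⊗[K] H) :
    bimodAct f g hg₁ hg t counit = counit (R := K) t • counit := by
  induction t using TensorProduct.induction_on with
  | zero => simp
  | add t t' ht ht' => simp only [map_add, LinearMap.add_apply, ht, ht', add_smul]
  | tmul a b =>
    ext x
    simp only [bimodAct_tmul, coe_comp, Function.comp_apply, mulRight_apply, mulLeft_apply,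
      Bialgebra.counit_mul, hgε, hfε, counit_tmul, smul_eq_mul, LinearMap.smul_apply]
    ring

end Bialgebra

section Field

variable {K H : Type} [Field K] [Ring H] [HopfAlgebra K H]

lemma toConv_convMul (p q : Module.Dual K H) :
    toConv (convMul K p q) = toConv p * toConv q := by
  apply WithConv.ofConv_injective
  ext x
  simp only [convMul_apply, LinearMap.convMul_apply]
  induction comul (R := K) x using TensorProduct.induction_on with
  | zero => simp
  | add s t hs ht => simp only [map_add, hs, ht]
  | tmul a b => simp

lemma convMul_assoc (p q r : Module.Dual K H) :
    convMul K (convMul K p q) r = convMul K p (convMul K q r) := by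
  apply WithConv.toConv_injective
  simp only [toConv_convMul, mul_assoc]

lemma toConv_counit : toConv (counit : Module.Dual K H) = 1 := rfl

lemma convMul_counit_left (q : Module.Dual K H) : convMul K counit q = q := by
  apply WithConv.toConv_injective
  rw [toConv_convMul, toConv_counit, one_mul]

lemma convMul_counit_right (p : Module.Dual K H) : convMul K p counit = p := by
  apply WithConv.toConv_injective
  rw [toConv_convMul, toConv_counit, mul_one]

lemma convMul_repr {ι : Type*} (p q : Module.Dual K H) {x : H} (r : Repr K x ι) :
    convMul K p q x = ∑ i ∈ r.index, p (r.left i) * q (r.right i) := by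
  simp [← r.eq, map_sum]

variable {f : H →ₐ[K] H} {g : H →ₗ[K] H} {hg₁ : g 1 = 1} {hg : ∀ x y, g (x * y) = g y * g x}

lemma bimodAct_convMul
    (hf : ∀ x, comul (f x) = map f.toLinearMap f.toLinearMap (comul (R := K) x))
    (hgc : ∀ x, comul (g x) = map g g (TensorProduct.comm K H H (comul (R := K) x)))
    (t : H ⊗[K] H) (p q : Module.Dual K H) :
    bimodAct f g hg₁ hg t (convMul K p q) = TensorProduct.lift ((convMul K).compl₁₂
      ((bimodAct f g hg₁ hg).toLinearMap.flip p) ((bimodAct f g hg₁ hg).toLinearMap.flip q))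
      (comulTensorCop t) := by
  induction t using TensorProduct.induction_on with
  | zero => simp
  | add t t' ht ht' => simp only [map_add, ht, ht', LinearMap.add_apply]
  | tmul a b =>
    -- In Sweedler sums over `Δ a`, `Δ b`, `Δ x` both sides are the same triple sum.
    ext x
    simp only [bimodAct_tmul, LinearMap.comp_apply, mulLeft_apply, mulRight_apply,
      comulTensorCop, map_tmul, LinearEquiv.coe_coe]
    rw [convMul_apply]
    simp only [Bialgebra.comul_mul, hf, hgc]
    simp only [← (ℛ K a).eq, ← (ℛ K b).eq, ← (ℛ K x).eq]
    simp only [map_sum, comm_tmul, map_tmul, AlgHom.toLinearMap_apply, Finset.mul_sum,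
      Finset.sum_mul, Algebra.TensorProduct.tmul_mul_tmul, LinearEquiv.coe_coe, lid_tmul,
      smul_eq_mul, tmul_sum, sum_tmul, tensorTensorTensorComm_tmul, lift.tmul, compl₁₂_apply,
      flip_apply, bimodAct_tmul, coe_sum, Finset.sum_apply, convMul_repr _ _ (ℛ K x), coe_comp,
      Function.comp_apply, mulRight_apply, mulLeft_apply]
    conv_rhs => rw [Finset.sum_comm]
    exact Finset.sum_congr rfl fun _ _ => Finset.sum_comm

lemma dprod_eq_smashMul (β Sinv : H →ₗ[K] H) (hg₁ : (Sinv ∘ₗ β) 1 = 1)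
    (hg : ∀ x y, (Sinv ∘ₗ β) (x * y) = (Sinv ∘ₗ β) y * (Sinv ∘ₗ β) x)
    (p : Module.Dual K H) (h : H) (q : Module.Dual K H) (l : H) :
    dprod K f.toLinearMap β Sinv p h q l = SmashProduct.smashMul (bimodAct f (Sinv ∘ₗ β) hg₁ hg)
      (convMul K) (twoSidedCoaction K H) (p ⊗ₜ h) (q ⊗ₜ l) := by
  change lift3 K _ (lTensor H comul (comul h)) = rTensor H (convMul K p)
    (SmashProduct.crossOp _ ((TensorProduct.assoc K H H H).symm
      (lTensor H (TensorProduct.comm K H H).toLinearMap (lTensor H comul (comul h)))) (q ⊗ₜ l))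
  induction lTensor H comul (comul (R := K) h) using TensorProduct.induction_on with
  | zero => simp
  | add t t' ht ht' => simp only [map_add, LinearMap.add_apply, ht, ht']
  | tmul a t =>
    induction t using TensorProduct.induction_on with
    | zero => simp
    | add t t' ht ht' => simp only [tmul_add, map_add, LinearMap.add_apply, ht, ht']
    | tmul b c => simp [lift3, coreTri, bimodAct_tmul]

lemma toD1_injective : Function.Injective (toD1 K (H := H)) :=
  Function.LeftInverse.injective (g := fun x => TensorProduct.rid K _ (lTensor _ counit x))
    fun p => by simp [toD1]

lemma toD2_injective : Function.Injective (toD2 K (H := H)) :=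
  Function.LeftInverse.injective
    (g := fun x => TensorProduct.lid K H (rTensor H (LinearMap.applyₗ (1 : H)) x))
    fun h => by simp [toD2]

end Field

end DCP

theorem stmt3_general (K H : Type) [Field K] [Ring H] [HopfAlgebra K H]
    (Sinv : H →ₗ[K] H)
    (hS1 : Sinv ∘ₗ HopfAlgebra.antipode (R := K) (A := H) = LinearMap.id)
    (hS2 : HopfAlgebra.antipode (R := K) (A := H) ∘ₗ Sinv = LinearMap.id)
    (α β : H ≃ₗ[K] H)
    (hα : DCP.IsHopfAut K α)
    (hβ : DCP.IsHopfAut K β)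
    (M : Module.Dual K H ⊗[K] H →ₗ[K] Module.Dual K H ⊗[K] H →ₗ[K] Module.Dual K H ⊗[K] H)
    (hM : ∀ (p : Module.Dual K H) (h : H) (q : Module.Dual K H) (l : H),
      M (p ⊗ₜ[K] h) (q ⊗ₜ[K] l) = DCP.dprod K (α.toLinearMap) (β.toLinearMap) Sinv p h q l)
    :
    (∀ x y z : Module.Dual K H ⊗[K] H, M (M x y) z = M x (M y z)) ∧
    (∀ x : Module.Dual K H ⊗[K] H,
      M ((Coalgebra.counit : Module.Dual K H) ⊗ₜ[K] (1 : H)) x = x ∧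
      M x ((Coalgebra.counit : Module.Dual K H) ⊗ₜ[K] (1 : H)) = x) ∧
    (∀ p p' : Module.Dual K H,
      M (p ⊗ₜ[K] (1 : H)) (p' ⊗ₜ[K] (1 : H)) = (DCP.convMul K p p') ⊗ₜ[K] (1 : H)) ∧
    Function.Injective (DCP.toD1 K (H := H)) ∧
    (∀ h l : H, M (DCP.toD2 K h) (DCP.toD2 K l) = DCP.toD2 K (h * l)) ∧
    Function.Injective (DCP.toD2 K (H := H)) := by
  obtain ⟨hαmul, hα1, hαcomul, hαcounit⟩ := hα
  obtain ⟨hβmul, hβ1, hβcomul, hβcounit⟩ := hβ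
  let f : H →ₐ[K] H := AlgHom.ofLinearMap α.toLinearMap hα1 hαmul
  set g := Sinv ∘ₗ β.toLinearMap
  have hg₁ : g 1 = 1 := by simp [g, hβ1, HopfAlgebra.inv_antipode_one hS1]
  have hg (x y : H) : g (x * y) = g y * g x := by
    simp [g, hβmul, HopfAlgebra.inv_antipode_mul hS1 hS2]
  have hgc (x : H) : comul (R := K) (g x) = map g g (TensorProduct.comm K H H (comul x)) := by
    rw [LinearMap.comp_apply, HopfAlgebra.comul_inv_antipode hS1 hS2,
      ← LinearMap.comp_apply comul, hβcomul, LinearMap.comp_apply, ← map_comm, map_map]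
  have hgε (x : H) : counit (R := K) (g x) = counit x :=
    (HopfAlgebra.counit_inv_antipode hS2 (β x)).trans (LinearMap.congr_fun hβcounit x)
  have hact :=
    DCP.bimodAct_counit (f := f) (hg₁ := hg₁) (hg := hg) (LinearMap.congr_fun hαcounit) hgε
  have hunit : DCP.convMul K (counit : Module.Dual K H) = LinearMap.id :=
    LinearMap.ext DCP.convMul_counit_left
  obtain rfl : M = SmashProduct.smashMul (DCP.bimodAct f g hg₁ hg) (DCP.convMul K)
      (DCP.twoSidedCoaction K H) :=
    TensorProduct.ext' fun p h => TensorProduct.ext' fun q l => by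
      rw [hM, ← DCP.dprod_eq_smashMul]; rfl
  refine ⟨?_, fun x => ⟨?_, ?_⟩, SmashProduct.smashMul_tmul_one_tmul_one, DCP.toD1_injective,
    fun h l => ?_, DCP.toD2_injective⟩
  · exact SmashProduct.smashMul_assoc DCP.convMul_assoc DCP.comulTensorCop
      (DCP.bimodAct_convMul (LinearMap.congr_fun hαcomul) hgc) DCP.twoSidedCoaction_coassoc
  · exact SmashProduct.smashMul_unit_left hunit x
  · exact SmashProduct.smashMul_unit_right DCP.convMul_counit_right hact
      DCP.twoSidedCoaction_counit x
  · exact SmashProduct.smashMul_unit_tmul_unit_tmul hunit hact DCP.twoSidedCoaction_counit h l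

/-- The diagonal crossed product `H* ⋈ H_(α,β)` is a unital associative algebra with unit
`ε ⋈ 1`, and `p ↦ p ⋈ 1`, `h ↦ ε ⋈ h` are injective algebra maps. -/
theorem stmt3 (K H : Type) [Field K] [Ring H] [HopfAlgebra K H] [FiniteDimensional K H]
    (Sinv : H →ₗ[K] H)
    (hS1 : Sinv ∘ₗ HopfAlgebra.antipode (R := K) (A := H) = LinearMap.id)
    (hS2 : HopfAlgebra.antipode (R := K) (A := H) ∘ₗ Sinv = LinearMap.id)
    (α β : H ≃ₗ[K] H)
    (hα : DCP.IsHopfAut K α)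
    (hβ : DCP.IsHopfAut K β)
    (M : Module.Dual K H ⊗[K] H →ₗ[K] Module.Dual K H ⊗[K] H →ₗ[K] Module.Dual K H ⊗[K] H)
    (hM : ∀ (p : Module.Dual K H) (h : H) (q : Module.Dual K H) (l : H),
      M (p ⊗ₜ[K] h) (q ⊗ₜ[K] l) = DCP.dprod K (α.toLinearMap) (β.toLinearMap) Sinv p h q l)
    :
    (∀ x y z : Module.Dual K H ⊗[K] H, M (M x y) z = M x (M y z)) ∧
    (∀ x : Module.Dual K H ⊗[K] H,
      M ((Coalgebra.counit : Module.Dual K H) ⊗ₜ[K] (1 : H)) x = x ∧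
      M x ((Coalgebra.counit : Module.Dual K H) ⊗ₜ[K] (1 : H)) = x) ∧
    (∀ p p' : Module.Dual K H,
      M (p ⊗ₜ[K] (1 : H)) (p' ⊗ₜ[K] (1 : H)) = (DCP.convMul K p p') ⊗ₜ[K] (1 : H)) ∧
    Function.Injective (DCP.toD1 K (H := H)) ∧
    (∀ h l : H, M (DCP.toD2 K h) (DCP.toD2 K l) = DCP.toD2 K (h * l)) ∧
    Function.Injective (DCP.toD2 K (H := H)) :=
  stmt3_general K H Sinv hS1 hS2 α β hα hβ M hM
end
end

section
/- Let H be a finite dimensional Hopf algebra. In the diagonal crossed product H* ⋈ H_(α,β), the following commutation rule holds: Σ ⟨p₁, h₂⟩ (ε ⋈ β⁻¹(h₁)) (p₂ ⋈ 1) = Σ ⟨p₂, αβ⁻¹(h₁)⟩ (p₁ ⋈ β⁻¹(h₂)) for all p ∈ H* and h ∈ H. -/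
open TensorProduct LinearMap

noncomputable section

/-!
Unfolding the product with `ε` and `1`, and pulling the coalgebra map `β⁻¹` out of the coproduct,
the left-hand side becomes `Σ ⟨p, h₄ S⁻¹(h₃) · _ · αβ⁻¹(h₁)⟩ ⊗ β⁻¹(h₂)` once coassociativity
regroups the four Sweedler legs. Since `S` is injective and antimultiplicative,
`Σ h₂ S⁻¹(h₁) = ε(h) 1` (applying `S` gives `Σ h₁ S(h₂)`), which collapses the middle factor and
leaves the right-hand side.
-/

namespace DCP

variable {K H : Type} [Field K] [Ring H] [HopfAlgebra K H]

@[simp] lemma lift3_tmul {W : Type} [AddCommMonoid W] [Module K W]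
    (Φ : H →ₗ[K] H →ₗ[K] H →ₗ[K] W) (a b c : H) :
    lift3 K Φ (a ⊗ₜ (b ⊗ₜ c)) = Φ a b c := rfl

@[simp] lemma coreTri_apply (u v : H →ₗ[K] H) (F : Module.Dual K H →ₗ[K] Module.Dual K H)
    (g : H →ₗ[K] H) (p : Module.Dual K H) (k₁ k₂ k₃ : H) :
    coreTri K u v F g p k₁ k₂ k₃ = F (p ∘ₗ mulLeft K (u k₃) ∘ₗ mulRight K (v k₁)) ⊗ₜ g k₂ :=
  rfl

lemma convMul_counit : convMul K (Coalgebra.counit : Module.Dual K H) = LinearMap.id := by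
  ext q x
  rw [convMul_apply, ← lTensor_comp_rTensor, comp_apply, Coalgebra.rTensor_counit_comul]
  simp

lemma dprod_counit_one (α β Sinv : H →ₗ[K] H) (h : H) (q : Module.Dual K H) :
    dprod K α β Sinv Coalgebra.counit h q 1
      = lift3 K (coreTri K (Sinv ∘ₗ β) α LinearMap.id LinearMap.id q) (comul2 K h) := by
  rw [dprod, convMul_counit, mulRight_one]

lemma comul_comp_symm {A B : Type} [AddCommMonoid A] [Module K A] [CoalgebraStruct K A]
    [AddCommMonoid B] [Module K B] [CoalgebraStruct K B] {e : A ≃ₗ[K] B}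
    (he : Coalgebra.comul ∘ₗ e.toLinearMap = map e.toLinearMap e.toLinearMap ∘ₗ Coalgebra.comul) :
    Coalgebra.comul ∘ₗ e.symm.toLinearMap
      = map e.symm.toLinearMap e.symm.toLinearMap ∘ₗ Coalgebra.comul := by
  ext x
  have hx := congr($he (e.symm x))
  simp only [comp_apply, LinearEquiv.coe_coe, LinearEquiv.apply_symm_apply] at hx
  rw [comp_apply, comp_apply, hx, ← comp_apply (map _ _), ← map_comp]
  simp

lemma comul2_comp {f : H →ₗ[K] H}
    (hf : Coalgebra.comul ∘ₗ f = map f f ∘ₗ Coalgebra.comul) :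
    comul2 K ∘ₗ f = map f (map f f) ∘ₗ comul2 K := by
  rw [comul2, comp_assoc, hf, ← comp_assoc, lTensor_comp_map, hf, ← comp_assoc,
    map_comp_lTensor]

def twistMul (Sinv : H →ₗ[K] H) : H ⊗[K] H →ₗ[K] H :=
  mul' K H ∘ₗ map LinearMap.id Sinv ∘ₗ (TensorProduct.comm K H H).toLinearMap

@[simp] lemma twistMul_tmul (Sinv : H →ₗ[K] H) (c d : H) : twistMul Sinv (c ⊗ₜ d) = d * Sinv c :=
  rfl

lemma twistMul_comp_comul {Sinv : H →ₗ[K] H}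
    (hS1 : Sinv ∘ₗ HopfAlgebra.antipode K = LinearMap.id)
    (hS2 : HopfAlgebra.antipode K ∘ₗ Sinv = LinearMap.id) :
    twistMul Sinv ∘ₗ Coalgebra.comul = Algebra.linearMap K H ∘ₗ Coalgebra.counit := by
  have hS : HopfAlgebra.antipode K ∘ₗ twistMul Sinv
      = mul' K H ∘ₗ lTensor H (HopfAlgebra.antipode K) := by
    ext c d
    simp [HopfAlgebra.antipode_mul_antidistrib, ← comp_apply (HopfAlgebra.antipode K) Sinv, hS2]
  have hSinv_one : Sinv 1 = 1 := by
    simpa using congr($hS1 1)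
  calc twistMul Sinv ∘ₗ Coalgebra.comul
      = Sinv ∘ₗ HopfAlgebra.antipode K ∘ₗ twistMul Sinv ∘ₗ Coalgebra.comul := by
        rw [← comp_assoc, hS1, id_comp]
    _ = Algebra.linearMap K H ∘ₗ Coalgebra.counit := by
        rw [← comp_assoc _ (twistMul Sinv), hS, comp_assoc, HopfAlgebra.mul_antipode_lTensor_comul]
        ext
        simp [Algebra.algebraMap_eq_smul_one, hSinv_one]

lemma lTensor_twistMul_comp_comul2 {Sinv : H →ₗ[K] H}
    (hS1 : Sinv ∘ₗ HopfAlgebra.antipode K = LinearMap.id)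
    (hS2 : HopfAlgebra.antipode K ∘ₗ Sinv = LinearMap.id) :
    lTensor H (twistMul Sinv) ∘ₗ comul2 K = (TensorProduct.mk K H H).flip 1 := by
  ext x
  rw [comul2, ← comp_assoc, ← lTensor_comp, twistMul_comp_comul hS1 hS2, lTensor_comp]
  simp [Coalgebra.lTensor_counit_comul]

lemma assoc_rTensor_comul2_comp_comul :
    lTensor H (TensorProduct.assoc K H H H).toLinearMap
        ∘ₗ (TensorProduct.assoc K H (H ⊗[K] H) H).toLinearMap
        ∘ₗ rTensor H (comul2 K) ∘ₗ Coalgebra.comul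
      = lTensor H (comul2 K) ∘ₗ (Coalgebra.comul : H →ₗ[K] H ⊗[K] H) := by
  simp only [comul2, coassoc_simps]

def commutationMap (α β : H ≃ₗ[K] H) (p : Module.Dual K H) :
    H ⊗[K] (H ⊗[K] H) →ₗ[K] Module.Dual K H ⊗[K] H :=
  lift3 K (coreTri K LinearMap.id (α.toLinearMap ∘ₗ β.symm.toLinearMap) LinearMap.id
    β.symm.toLinearMap p)

lemma lift_toD2_toD1_eq {Sinv : H →ₗ[K] H} {α β : H ≃ₗ[K] H} (hβ : IsHopfAut K β)
    {M : Module.Dual K H ⊗[K] H →ₗ[K] Module.Dual K H ⊗[K] H →ₗ[K] Module.Dual K H ⊗[K] H}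
    (hM : ∀ (p : Module.Dual K H) (h : H) (q : Module.Dual K H) (l : H),
      M (p ⊗ₜ[K] h) (q ⊗ₜ[K] l) = dprod K α.toLinearMap β.toLinearMap Sinv p h q l)
    (p : Module.Dual K H) :
    TensorProduct.lift (M.compl₁₂ (toD2 K ∘ₗ β.symm.toLinearMap)
        (toD1 K ∘ₗ LinearMap.llcomp K H H K p ∘ₗ LinearMap.mul K H))
      = commutationMap α β p ∘ₗ lTensor H (lTensor H (twistMul Sinv))
          ∘ₗ lTensor H (TensorProduct.assoc K H H H).toLinearMap
          ∘ₗ (TensorProduct.assoc K H (H ⊗[K] H) H).toLinearMap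
          ∘ₗ rTensor H (comul2 K) := by
  ext x y
  have hpoint : lift3 K (coreTri K (Sinv ∘ₗ β.toLinearMap) α.toLinearMap LinearMap.id
        LinearMap.id (LinearMap.llcomp K H H K p (LinearMap.mul K H y)))
        ∘ₗ map β.symm.toLinearMap (map β.symm.toLinearMap β.symm.toLinearMap)
      = commutationMap α β p ∘ₗ lTensor H (lTensor H (twistMul Sinv))
          ∘ₗ lTensor H (TensorProduct.assoc K H H H).toLinearMap
          ∘ₗ (TensorProduct.assoc K H (H ⊗[K] H) H).toLinearMap
          ∘ₗ (TensorProduct.mk K _ H).flip y := by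
    ext k₁ k₂ k₃
    simp [commutationMap]
    rfl
  have hcomul2 := congr($(comul2_comp (comul_comp_symm hβ.2.2.1)) x)
  simp only [comp_apply, LinearEquiv.coe_coe] at hcomul2
  simpa [toD1, toD2, hM, dprod_counit_one, hcomul2] using congr($hpoint (comul2 K x))

lemma commutationMap_comp_lTensor_flip_mk_one (α β : H ≃ₗ[K] H) (p : Module.Dual K H) :
    commutationMap α β p ∘ₗ lTensor H ((TensorProduct.mk K H H).flip 1)
      = TensorProduct.lift ((TensorProduct.mk K (Module.Dual K H) H).compl₁₂
          (LinearMap.llcomp K H H K p ∘ₗ (LinearMap.mul K H).flip ∘ₗ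
            α.toLinearMap ∘ₗ β.symm.toLinearMap)
          β.symm.toLinearMap) := by
  ext x y
  simp [commutationMap]
  rfl

end DCP

theorem stmt4_general (K H : Type) [Field K] [Ring H] [HopfAlgebra K H]
    (Sinv : H →ₗ[K] H)
    (hS1 : Sinv ∘ₗ HopfAlgebra.antipode (R := K) (A := H) = LinearMap.id)
    (hS2 : HopfAlgebra.antipode (R := K) (A := H) ∘ₗ Sinv = LinearMap.id)
    (α β : H ≃ₗ[K] H)
    (hβ : DCP.IsHopfAut K β)
    (M : Module.Dual K H ⊗[K] H →ₗ[K] Module.Dual K H ⊗[K] H →ₗ[K] Module.Dual K H ⊗[K] H)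
    (hM : ∀ (p : Module.Dual K H) (h : H) (q : Module.Dual K H) (l : H),
      M (p ⊗ₜ[K] h) (q ⊗ₜ[K] l) = DCP.dprod K (α.toLinearMap) (β.toLinearMap) Sinv p h q l)
    :
    ∀ (p : Module.Dual K H) (h : H),
      TensorProduct.lift (M.compl₁₂ (DCP.toD2 K ∘ₗ β.symm.toLinearMap)
          (DCP.toD1 K ∘ₗ LinearMap.llcomp K H H K p ∘ₗ LinearMap.mul K H))
        (Coalgebra.comul h)
      = TensorProduct.lift ((TensorProduct.mk K (Module.Dual K H) H).compl₁₂
          (LinearMap.llcomp K H H K p ∘ₗ (LinearMap.mul K H).flip ∘ₗ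
            α.toLinearMap ∘ₗ β.symm.toLinearMap)
          β.symm.toLinearMap) (Coalgebra.comul h) := by
  intro p h
  rw [DCP.lift_toD2_toD1_eq hβ hM, ← DCP.commutationMap_comp_lTensor_flip_mk_one,
    ← DCP.lTensor_twistMul_comp_comul2 hS1 hS2, lTensor_comp]
  simp only [← comp_apply, comp_assoc, DCP.assoc_rTensor_comul2_comp_comul]

/-- The commutation rule
`Σ ⟨p₁, h₂⟩ (ε ⋈ β⁻¹(h₁)) (p₂ ⋈ 1) = Σ ⟨p₂, αβ⁻¹(h₁)⟩ (p₁ ⋈ β⁻¹(h₂))` in `H* ⋈ H_(α,β)`. -/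
theorem stmt4 (K H : Type) [Field K] [Ring H] [HopfAlgebra K H] [FiniteDimensional K H]
    (Sinv : H →ₗ[K] H)
    (hS1 : Sinv ∘ₗ HopfAlgebra.antipode (R := K) (A := H) = LinearMap.id)
    (hS2 : HopfAlgebra.antipode (R := K) (A := H) ∘ₗ Sinv = LinearMap.id)
    (α β : H ≃ₗ[K] H)
    (hα : DCP.IsHopfAut K α)
    (hβ : DCP.IsHopfAut K β)
    (M : Module.Dual K H ⊗[K] H →ₗ[K] Module.Dual K H ⊗[K] H →ₗ[K] Module.Dual K H ⊗[K] H)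
    (hM : ∀ (p : Module.Dual K H) (h : H) (q : Module.Dual K H) (l : H),
      M (p ⊗ₜ[K] h) (q ⊗ₜ[K] l) = DCP.dprod K (α.toLinearMap) (β.toLinearMap) Sinv p h q l)
    :
    ∀ (p : Module.Dual K H) (h : H),
      TensorProduct.lift (M.compl₁₂ (DCP.toD2 K ∘ₗ β.symm.toLinearMap)
          (DCP.toD1 K ∘ₗ LinearMap.llcomp K H H K p ∘ₗ LinearMap.mul K H))
        (Coalgebra.comul h)
      = TensorProduct.lift ((TensorProduct.mk K (Module.Dual K H) H).compl₁₂
          (LinearMap.llcomp K H H K p ∘ₗ (LinearMap.mul K H).flip ∘ₗ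
            α.toLinearMap ∘ₗ β.symm.toLinearMap)
          β.symm.toLinearMap) (Coalgebra.comul h) :=
  stmt4_general K H Sinv hS1 hS2 α β hβ M hM
end
end

section
/- Let H be a finite dimensional Hopf algebra. For Hopf automorphisms α, β, γ, δ of H, the map ξ_(α,β)^(γ,δ) : H* ⋈ H_(γ,δ) → H* ⋈ H_{(α,β)*(γ,δ)*(α,β)⁻¹} defined by ξ_(α,β)^(γ,δ)(p ⋈ h) = (p ∘ βα⁻¹) ⋈ αγ⁻¹β⁻¹γ(h) is an algebra isomorphism, where (α,β)*(γ,δ)*(α,β)⁻¹ = (αγα⁻¹, αβ⁻¹δγ⁻¹βγα⁻¹). -/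
open TensorProduct LinearMap

noncomputable section

/-! `ξ = map φᵀ ψ` for the Hopf automorphisms `φ = βα⁻¹` and `ψ = αγ⁻¹β⁻¹γ`. Precomposition with
a coalgebra map is multiplicative on `H*`, and `ψ` respects the Sweedler splitting of `h` and the
product, so `ξ` carries the product twisted by `(a, b)` to the one twisted by `(a', b')` as soon as
`φ a' ψ = a` and `φ S⁻¹ b' ψ = S⁻¹ b`. For `(a', b') = (αγα⁻¹, αβ⁻¹δγ⁻¹βγα⁻¹)` both identities
collapse in `Aut H`, once one knows that the Hopf automorphism `φ` commutes with `S`, hence with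
`S⁻¹`. -/

namespace BialgHomClass

open HopfAlgebra WithConv Coalgebra

variable {R A B F : Type*} [CommSemiring R] [Semiring A] [Semiring B] [HopfAlgebra R A]
  [HopfAlgebra R B] [FunLike F A B] [BialgHomClass F R A B]

/-- Both sides are convolution inverses of `f` in `WithConv (A →ₗ[R] B)`. -/
theorem linearMap_comp_antipode (f : F) :
    (f : A →ₗ[R] B) ∘ₗ antipode R = antipode R ∘ₗ (f : A →ₗ[R] B) := by
  apply toConv_injective
  apply left_inv_eq_right_inv (a := toConv (f : A →ₗ[R] B))
  · ext a
    simp [(ℛ R a).convMul_apply, ← map_mul, ← map_sum, sum_antipode_mul_eq_algebraMap_counit,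
      AlgHomClass.commutes]
  · ext a
    simpa [(ℛ R a).convMul_apply] using
      sum_mul_antipode_eq_algebraMap_counit ((ℛ R a).induced f)

theorem linearMap_comp_antipodeInv (f : F) {SA : A →ₗ[R] A} {SB : B →ₗ[R] B}
    (hA : antipode R ∘ₗ SA = .id) (hB : SB ∘ₗ antipode R = .id) :
    (f : A →ₗ[R] B) ∘ₗ SA = SB ∘ₗ f :=
  calc (f : A →ₗ[R] B) ∘ₗ SA = (SB ∘ₗ antipode R) ∘ₗ (f : A →ₗ[R] B) ∘ₗ SA := by
        rw [hB, LinearMap.id_comp]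
    _ = SB ∘ₗ ((f : A →ₗ[R] B) ∘ₗ antipode R) ∘ₗ SA := by
        rw [linearMap_comp_antipode]; rfl
    _ = SB ∘ₗ f := by rw [LinearMap.comp_assoc, hA, LinearMap.comp_id]

end BialgHomClass

namespace DCP

open Coalgebra

variable {K H : Type} [Field K] [Ring H] [HopfAlgebra K H]

def IsHopfAut.toBialgEquiv {f : H ≃ₗ[K] H} (hf : IsHopfAut K f) : H ≃ₐc[K] H :=
  { f with map_mul' := hf.1, counit_comp := hf.2.2.2, map_comp_comul := hf.2.2.1.symm }

lemma lift3_coreTri_tmul (u v : H →ₗ[K] H) (F : Module.Dual K H →ₗ[K] Module.Dual K H)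
    (g : H →ₗ[K] H) (p : Module.Dual K H) (x y z : H) :
    lift3 K (coreTri K u v F g p) (x ⊗ₜ (y ⊗ₜ z))
      = F (p ∘ₗ mulLeft K (u z) ∘ₗ mulRight K (v x)) ⊗ₜ g y := rfl

section

variable {F : Type*} [FunLike F H H]

lemma convMul_comp_coalgHom [CoalgHomClass F K H H] (φ : F) (p r : Module.Dual K H) :
    convMul K p r ∘ₗ (φ : H →ₗ[K] H) = convMul K (p ∘ₗ φ) (r ∘ₗ φ) := by
  ext x
  change TensorProduct.lid K K (map p r (comul (φ x))) = _
  rw [← CoalgHomClass.map_comp_comul_apply φ, ← LinearMap.comp_apply (map _ _), ← map_comp]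
  rfl

lemma comul2_coalgHom_apply [CoalgHomClass F K H H] (ψ : F) (h : H) :
    comul2 K (ψ h) = map (ψ : H →ₗ[K] H) (map ψ ψ) (comul2 K h) := by
  simp only [comul2, LinearMap.comp_apply]
  rw [← CoalgHomClass.map_comp_comul_apply ψ]
  induction comul (R := K) h with
  | zero => simp
  | add s t hs ht => simp only [map_add, hs, ht]
  | tmul x y => simp

theorem map_dualMap_dprod [BialgHomClass F K H H] (φ ψ : F) {a b a' b' Sinv : H →ₗ[K] H}
    (ha : (φ : H →ₗ[K] H) ∘ₗ a' ∘ₗ ψ = a) (hb : (φ : H →ₗ[K] H) ∘ₗ Sinv ∘ₗ b' ∘ₗ ψ = Sinv ∘ₗ b)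
    (p : Module.Dual K H) (h : H) (q : Module.Dual K H) (l : H) :
    map (φ : H →ₗ[K] H).dualMap ψ (dprod K a b Sinv p h q l)
      = dprod K a' b' Sinv ((φ : H →ₗ[K] H).dualMap p) (ψ h)
          ((φ : H →ₗ[K] H).dualMap q) (ψ l) := by
  have ha' (x : H) : φ (a' (ψ x)) = a x := LinearMap.congr_fun ha x
  have hb' (x : H) : φ (Sinv (b' (ψ x))) = Sinv (b x) := LinearMap.congr_fun hb x
  rw [dprod, dprod, comul2_coalgHom_apply]
  induction comul2 K h with
  | zero => simp
  | add s t hs ht => simp only [map_add, hs, ht]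
  | tmul x t =>
    induction t with
    | zero => simp
    | add s t hs ht => simp only [tmul_add, map_add, hs, ht]
    | tmul y z =>
      rw [map_tmul, map_tmul, lift3_coreTri_tmul, lift3_coreTri_tmul, map_tmul]
      congr 1
      · rw [dualMap_apply', convMul_comp_coalgHom]
        congr 1
        -- both sides evaluate `q` at `S⁻¹ (b z) * φ w * a x`
        ext w
        simp [ha', hb']
      · simp

end

end DCP

theorem stmt8_general (K H : Type) [Field K] [Ring H] [HopfAlgebra K H]
    (Sinv : H →ₗ[K] H)
    (hS1 : Sinv ∘ₗ HopfAlgebra.antipode (R := K) (A := H) = LinearMap.id)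
    (hS2 : HopfAlgebra.antipode (R := K) (A := H) ∘ₗ Sinv = LinearMap.id)
    (α β γ δ : H ≃ₗ[K] H)
    (hα : DCP.IsHopfAut K α)
    (hβ : DCP.IsHopfAut K β)
    (hγ : DCP.IsHopfAut K γ)
    (M : Module.Dual K H ⊗[K] H →ₗ[K] Module.Dual K H ⊗[K] H →ₗ[K] Module.Dual K H ⊗[K] H)
    (hM : ∀ (p : Module.Dual K H) (h : H) (q : Module.Dual K H) (l : H),
      M (p ⊗ₜ[K] h) (q ⊗ₜ[K] l) = DCP.dprod K (γ.toLinearMap) (δ.toLinearMap) Sinv p h q l)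
    (Mnew : Module.Dual K H ⊗[K] H →ₗ[K] Module.Dual K H ⊗[K] H →ₗ[K] Module.Dual K H ⊗[K] H)
    (hMnew : ∀ (p : Module.Dual K H) (h : H) (q : Module.Dual K H) (l : H),
      Mnew (p ⊗ₜ[K] h) (q ⊗ₜ[K] l) = DCP.dprod K (α.toLinearMap ∘ₗ γ.toLinearMap ∘ₗ α.symm.toLinearMap) (α.toLinearMap ∘ₗ β.symm.toLinearMap ∘ₗ δ.toLinearMap ∘ₗ γ.symm.toLinearMap ∘ₗ β.toLinearMap ∘ₗ γ.toLinearMap ∘ₗ α.symm.toLinearMap) Sinv p h q l)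
    :
    Function.Bijective (DCP.xiMap K α β γ) ∧
    (∀ (p : Module.Dual K H) (h : H) (q : Module.Dual K H) (l : H),
      DCP.xiMap K α β γ (M (p ⊗ₜ[K] h) (q ⊗ₜ[K] l))
        = Mnew (DCP.xiMap K α β γ (p ⊗ₜ[K] h)) (DCP.xiMap K α β γ (q ⊗ₜ[K] l))) := by
  let φ : H ≃ₐc[K] H := hα.toBialgEquiv.symm.trans hβ.toBialgEquiv
  let ψ : H ≃ₐc[K] H :=
    hγ.toBialgEquiv.trans (hβ.toBialgEquiv.symm.trans (hγ.toBialgEquiv.symm.trans hα.toBialgEquiv))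
  have hφ (x : H) : φ x = β (α.symm x) := rfl
  have hψ (x : H) : ψ x = α (γ.symm (β.symm (γ x))) := rfl
  have hξ : DCP.xiMap K α β γ = map (φ : H →ₗ[K] H).dualMap ψ := rfl
  have hφS := BialgHomClass.linearMap_comp_antipodeInv φ hS2 hS1
  refine ⟨hξ ▸ map_bijective (dualMap_bijective_iff.mpr φ.bijective) ψ.bijective, ?_⟩
  intro p h q l
  rw [hM, hξ, map_tmul, map_tmul, hMnew]
  refine DCP.map_dualMap_dprod φ ψ ?_ ?_ p h q l
  · ext x; simp [hφ, hψ]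
  · rw [← LinearMap.comp_assoc, hφS]
    ext x; simp [hφ, hψ]

/-- The crossing map `ξ_(α,β)^(γ,δ)` is an algebra isomorphism onto the component indexed by
`(α,β)*(γ,δ)*(α,β)⁻¹`. -/
theorem stmt8 (K H : Type) [Field K] [Ring H] [HopfAlgebra K H] [FiniteDimensional K H]
    (Sinv : H →ₗ[K] H)
    (hS1 : Sinv ∘ₗ HopfAlgebra.antipode (R := K) (A := H) = LinearMap.id)
    (hS2 : HopfAlgebra.antipode (R := K) (A := H) ∘ₗ Sinv = LinearMap.id)
    (α β γ δ : H ≃ₗ[K] H)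
    (hα : DCP.IsHopfAut K α)
    (hβ : DCP.IsHopfAut K β)
    (hγ : DCP.IsHopfAut K γ)
    (hδ : DCP.IsHopfAut K δ)
    (M : Module.Dual K H ⊗[K] H →ₗ[K] Module.Dual K H ⊗[K] H →ₗ[K] Module.Dual K H ⊗[K] H)
    (hM : ∀ (p : Module.Dual K H) (h : H) (q : Module.Dual K H) (l : H),
      M (p ⊗ₜ[K] h) (q ⊗ₜ[K] l) = DCP.dprod K (γ.toLinearMap) (δ.toLinearMap) Sinv p h q l)
    (Mnew : Module.Dual K H ⊗[K] H →ₗ[K] Module.Dual K H ⊗[K] H →ₗ[K] Module.Dual K H ⊗[K] H)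
    (hMnew : ∀ (p : Module.Dual K H) (h : H) (q : Module.Dual K H) (l : H),
      Mnew (p ⊗ₜ[K] h) (q ⊗ₜ[K] l) = DCP.dprod K (α.toLinearMap ∘ₗ γ.toLinearMap ∘ₗ α.symm.toLinearMap) (α.toLinearMap ∘ₗ β.symm.toLinearMap ∘ₗ δ.toLinearMap ∘ₗ γ.symm.toLinearMap ∘ₗ β.toLinearMap ∘ₗ γ.toLinearMap ∘ₗ α.symm.toLinearMap) Sinv p h q l)
    :
    Function.Bijective (DCP.xiMap K α β γ) ∧
    (∀ (p : Module.Dual K H) (h : H) (q : Module.Dual K H) (l : H),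
      DCP.xiMap K α β γ (M (p ⊗ₜ[K] h) (q ⊗ₜ[K] l))
        = Mnew (DCP.xiMap K α β γ (p ⊗ₜ[K] h)) (DCP.xiMap K α β γ (q ⊗ₜ[K] l))) :=
  stmt8_general K H Sinv hS1 hS2 α β γ δ hα hβ hγ M hM Mnew hMnew
end
end

section
/- Let H be a finite dimensional Hopf algebra. The crossing maps respect the comultiplication: Δ_{(α,β)*(γ,δ)*(α,β)⁻¹, (α,β)*(μ,ν)*(α,β)⁻¹} ∘ ξ_(α,β)^{(γ,δ)*(μ,ν)} = (ξ_(α,β)^(γ,δ) ⊗ ξ_(α,β)^(μ,ν)) ∘ Δ_{(γ,δ),(μ,ν)}. -/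
open TensorProduct LinearMap

noncomputable section

/-! The crossing map is `t^* ⊗ f` with `t = β α⁻¹` an algebra automorphism of `H` and
`f = α (γμ)⁻¹ β⁻¹ (γμ)` a coalgebra automorphism of `H`. Dualising, `t^*` is a coalgebra map
of `H^*`, so `t^* ⊗ f` intertwines the two coproducts of `H^* ⋈ H` as soon as the twisting
automorphisms match: `(αμα⁻¹) f = (αγ⁻¹β⁻¹γ) μ` and
`(αμ⁻¹β⁻¹δγ⁻¹βγμα⁻¹) f = (αμ⁻¹β⁻¹μ) (μ⁻¹δμ)`, which are identities in the group of linear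
automorphisms. -/

namespace TensorProduct

variable {R M N M' N' : Type*} [CommRing R] [AddCommGroup M] [Module R M] [AddCommGroup N]
  [Module R N] [AddCommGroup M'] [Module R M'] [AddCommGroup N'] [Module R N']

theorem dualDistrib_comp_map_dualMap (f : M →ₗ[R] M') (g : N →ₗ[R] N') :
    dualDistrib R M N ∘ₗ map f.dualMap g.dualMap = (map f g).dualMap ∘ₗ dualDistrib R M' N' := by
  ext p q m n
  simp [dualDistrib_apply]

theorem dualDistribEquiv_symm_comp_dualMap_map [Module.Free R M] [Module.Finite R M]
    [Module.Free R N] [Module.Finite R N] [Module.Free R M'] [Module.Finite R M']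
    [Module.Free R N'] [Module.Finite R N'] (f : M →ₗ[R] M') (g : N →ₗ[R] N') :
    (dualDistribEquiv R M N).symm.toLinearMap ∘ₗ (map f g).dualMap
      = map f.dualMap g.dualMap ∘ₗ (dualDistribEquiv R M' N').symm.toLinearMap := by
  rw [LinearEquiv.toLinearMap_symm_comp_eq, ← LinearMap.comp_assoc,
    LinearEquiv.eq_comp_toLinearMap_symm]
  exact (dualDistrib_comp_map_dualMap f g).symm

end TensorProduct

namespace DCP

variable {K H : Type} [Field K] [Ring H] [HopfAlgebra K H]

theorem dcomul_comp_dualMap [FiniteDimensional K H] (t : H →ₐ[K] H) :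
    dcomul K ∘ₗ t.toLinearMap.dualMap
      = map t.toLinearMap.dualMap t.toLinearMap.dualMap ∘ₗ dcomul K := by
  rw [dcomul, LinearMap.comp_assoc, LinearMap.dualMap_comp_dualMap, AlgHom.comp_mul',
    ← LinearMap.dualMap_comp_dualMap, ← LinearMap.comp_assoc,
    TensorProduct.dualDistribEquiv_symm_comp_dualMap_map, LinearMap.comp_assoc]

theorem deltaComp_comp_map [FiniteDimensional K H] (t : H →ₐ[K] H) (f : H →ₗc[K] H)
    {c e c₀ e₀ g₁ g₂ : H →ₗ[K] H} (hc : c ∘ₗ f = g₁ ∘ₗ c₀) (he : e ∘ₗ f = g₂ ∘ₗ e₀) :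
    deltaComp K c e ∘ₗ map t.toLinearMap.dualMap f
      = map (map t.toLinearMap.dualMap g₁) (map t.toLinearMap.dualMap g₂) ∘ₗ deltaComp K c₀ e₀ := by
  have hdual : (TensorProduct.comm K _ _).toLinearMap ∘ₗ dcomul K ∘ₗ t.toLinearMap.dualMap
      = map t.toLinearMap.dualMap t.toLinearMap.dualMap ∘ₗ
          (TensorProduct.comm K _ _).toLinearMap ∘ₗ dcomul K := by
    rw [dcomul_comp_dualMap, ← LinearMap.comp_assoc, ← LinearMap.comp_assoc, map_comp_comm_eq]
  have hH : map c e ∘ₗ Coalgebra.comul ∘ₗ (f : H →ₗ[K] H)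
      = map g₁ g₂ ∘ₗ map c₀ e₀ ∘ₗ Coalgebra.comul := by
    rw [← CoalgHomClass.map_comp_comul f, ← LinearMap.comp_assoc, ← map_comp, hc, he, map_comp,
      LinearMap.comp_assoc]
  rw [deltaComp, deltaComp, LinearMap.comp_assoc, ← map_comp, LinearMap.comp_assoc, hdual,
    LinearMap.comp_assoc, hH, map_comp, ← LinearMap.comp_assoc, tensorTensorTensorComm_comp_map,
    LinearMap.comp_assoc]

variable {f : H ≃ₗ[K] H}

def IsHopfAut.toAlgEquiv (hf : IsHopfAut K f) : H ≃ₐ[K] H :=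
  AlgEquiv.ofLinearEquiv f hf.2.1 hf.1

def IsHopfAut.toCoalgEquiv (hf : IsHopfAut K f) : H ≃ₗc[K] H :=
  { f with
    counit_comp := hf.2.2.2
    map_comp_comul := hf.2.2.1.symm }

@[simp] theorem IsHopfAut.coe_toCoalgEquiv (hf : IsHopfAut K f) : ⇑hf.toCoalgEquiv = f := rfl

@[simp] theorem IsHopfAut.coe_toCoalgEquiv_symm (hf : IsHopfAut K f) :
    ⇑hf.toCoalgEquiv.symm = f.symm := rfl

end DCP

theorem stmt10_general (K H : Type) [Field K] [Ring H] [HopfAlgebra K H] [FiniteDimensional K H]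
    (α β γ δ μ : H ≃ₗ[K] H)
    (hα : DCP.IsHopfAut K α)
    (hβ : DCP.IsHopfAut K β)
    (hγ : DCP.IsHopfAut K γ)
    (hμ : DCP.IsHopfAut K μ)
    :
    DCP.deltaComp K (α.toLinearMap ∘ₗ μ.toLinearMap ∘ₗ α.symm.toLinearMap)
        (α.toLinearMap ∘ₗ μ.symm.toLinearMap ∘ₗ β.symm.toLinearMap ∘ₗ δ.toLinearMap ∘ₗ
          γ.symm.toLinearMap ∘ₗ β.toLinearMap ∘ₗ γ.toLinearMap ∘ₗ μ.toLinearMap ∘ₗ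
          α.symm.toLinearMap) ∘ₗ
      DCP.xiMap K α β (μ.trans γ)
    = TensorProduct.map (DCP.xiMap K α β γ) (DCP.xiMap K α β μ) ∘ₗ
        DCP.deltaComp K μ.toLinearMap
          (μ.symm.toLinearMap ∘ₗ δ.toLinearMap ∘ₗ μ.toLinearMap) := by
  let γμ := hμ.toCoalgEquiv.trans hγ.toCoalgEquiv
  exact DCP.deltaComp_comp_map (hα.toAlgEquiv.symm.trans hβ.toAlgEquiv).toAlgHom
    ((γμ.trans (hβ.toCoalgEquiv.symm.trans (γμ.symm.trans hα.toCoalgEquiv))) : H →ₗc[K] H)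
    (by ext; simp [γμ]) (by ext; simp [γμ])

/-- The crossing maps respect the comultiplication. -/
theorem stmt10 (K H : Type) [Field K] [Ring H] [HopfAlgebra K H] [FiniteDimensional K H]
    (Sinv : H →ₗ[K] H)
    (hS1 : Sinv ∘ₗ HopfAlgebra.antipode (R := K) (A := H) = LinearMap.id)
    (hS2 : HopfAlgebra.antipode (R := K) (A := H) ∘ₗ Sinv = LinearMap.id)
    (α β γ δ μ ν : H ≃ₗ[K] H)
    (hα : DCP.IsHopfAut K α)
    (hβ : DCP.IsHopfAut K β)
    (hγ : DCP.IsHopfAut K γ)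
    (hδ : DCP.IsHopfAut K δ)
    (hμ : DCP.IsHopfAut K μ)
    (hν : DCP.IsHopfAut K ν)
    :
    DCP.deltaComp K (α.toLinearMap ∘ₗ μ.toLinearMap ∘ₗ α.symm.toLinearMap)
        (α.toLinearMap ∘ₗ μ.symm.toLinearMap ∘ₗ β.symm.toLinearMap ∘ₗ δ.toLinearMap ∘ₗ
          γ.symm.toLinearMap ∘ₗ β.toLinearMap ∘ₗ γ.toLinearMap ∘ₗ μ.toLinearMap ∘ₗ
          α.symm.toLinearMap) ∘ₗ
      DCP.xiMap K α β (μ.trans γ)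
    = TensorProduct.map (DCP.xiMap K α β γ) (DCP.xiMap K α β μ) ∘ₗ
        DCP.deltaComp K μ.toLinearMap
          (μ.symm.toLinearMap ∘ₗ δ.toLinearMap ∘ₗ μ.toLinearMap) :=
  stmt10_general K H α β γ δ μ hα hβ hγ hμ
end
end

section
/- Let H be a finite dimensional Hopf algebra. Define R_{(α,β),(γ,δ)} = Σᵢ (ε ⋈ β⁻¹(eᵢ)) ⊗ (eⁱ ⋈ 1) ∈ (H* ⋈ H_(α,β)) ⊗ (H* ⋈ H_(γ,δ)). Then R is invariant under the diagonal crossing action: (ξ_(μ,ν) ⊗ ξ_(μ,ν))(R_{(α,β),(γ,δ)}) = R_{(μ,ν)*(α,β)*(μ,ν)⁻¹, (μ,ν)*(γ,δ)*(μ,ν)⁻¹} for all Hopf automorphisms μ, ν. -/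
open TensorProduct LinearMap

noncomputable section

/-! Hopf automorphisms preserve `ε` and `1`, so `ξ ⊗ ξ` only moves the middle legs of `R`:
the `H`-leg by `μα⁻¹ν⁻¹αβ⁻¹` and the dual leg by precomposition with `νμ⁻¹`. The latter is
transported to the `H`-leg because the canonical element `Σ eᵢ ⊗ eⁱ` of `H ⊗ H*` satisfies
`Σ g(eᵢ) ⊗ eⁱ = Σ eᵢ ⊗ (eⁱ ∘ g)` for every linear `g`. -/

theorem Module.Basis.sum_map_tmul_coord {R M : Type*} [CommSemiring R] [AddCommMonoid M]
    [Module R M] {ι : Type*} [Fintype ι] (b : Module.Basis ι R M) (g : M →ₗ[R] M) :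
    ∑ i, g (b i) ⊗ₜ[R] b.coord i = ∑ i, b i ⊗ₜ[R] (b.coord i ∘ₗ g) := by
  calc ∑ i, g (b i) ⊗ₜ[R] b.coord i
      = ∑ i, (∑ j, b.coord j (g (b i)) • b j) ⊗ₜ[R] b.coord i := by
        simp_rw [Module.Basis.coord_apply, b.sum_repr]
    _ = ∑ j, ∑ i, b j ⊗ₜ[R] (b.coord j (g (b i)) • b.coord i) := by
        simp_rw [sum_tmul, smul_tmul]
        exact Finset.sum_comm
    _ = ∑ j, b j ⊗ₜ[R] (b.coord j ∘ₗ g) := by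
        simp_rw [← tmul_sum]
        exact Finset.sum_congr rfl fun j _ =>
          congrArg _ (b.sum_dual_apply_smul_coord (b.coord j ∘ₗ g))

namespace DCP

variable {K H : Type} [Field K] [Ring H] [HopfAlgebra K H] {f : H ≃ₗ[K] H}

lemma IsHopfAut.counit_apply (hf : IsHopfAut K f) (x : H) :
    Coalgebra.counit (R := K) (f x) = Coalgebra.counit x :=
  LinearMap.congr_fun hf.2.2.2 x

lemma IsHopfAut.map_one (hf : IsHopfAut K f) : f 1 = 1 :=
  hf.2.1

lemma IsHopfAut.symm_map_one (hf : IsHopfAut K f) : f.symm 1 = 1 :=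
  f.symm_apply_eq.mpr hf.map_one.symm

lemma IsHopfAut.counit_symm_apply (hf : IsHopfAut K f) (x : H) :
    Coalgebra.counit (R := K) (f.symm x) = Coalgebra.counit x := by
  simpa using (hf.counit_apply (f.symm x)).symm

lemma xiMap_counit_tmul {a b : H ≃ₗ[K] H} (ha : IsHopfAut K a) (hb : IsHopfAut K b)
    (c : H ≃ₗ[K] H) (h : H) :
    xiMap K a b c ((Coalgebra.counit : Module.Dual K H) ⊗ₜ h)
      = (Coalgebra.counit : Module.Dual K H) ⊗ₜ
          (a.toLinearMap ∘ₗ c.symm.toLinearMap ∘ₗ b.symm.toLinearMap ∘ₗ c.toLinearMap) h := by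
  have hε : (b.toLinearMap ∘ₗ a.symm.toLinearMap).dualMap Coalgebra.counit
      = (Coalgebra.counit : Module.Dual K H) := by
    ext x
    exact (hb.counit_apply _).trans (ha.counit_symm_apply x)
  rw [xiMap, map_tmul, hε]

lemma xiMap_tmul_one {a b c : H ≃ₗ[K] H} (ha : IsHopfAut K a) (hb : IsHopfAut K b)
    (hc : IsHopfAut K c) (p : Module.Dual K H) :
    xiMap K a b c (p ⊗ₜ 1) = (b.toLinearMap ∘ₗ a.symm.toLinearMap).dualMap p ⊗ₜ 1 := by
  simp [xiMap, hc.map_one, hb.symm_map_one, hc.symm_map_one, ha.map_one]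

end DCP

theorem stmt14_general (K H : Type) [Field K] [Ring H] [HopfAlgebra K H]
    (α β γ μ ν : H ≃ₗ[K] H)
    (hγ : DCP.IsHopfAut K γ)
    (hμ : DCP.IsHopfAut K μ)
    (hν : DCP.IsHopfAut K ν)
    (ι : Type) [Fintype ι] (b : Module.Basis ι K H) :
    TensorProduct.map (DCP.xiMap K μ ν α) (DCP.xiMap K μ ν γ)
      (∑ i, ((Coalgebra.counit : Module.Dual K H) ⊗ₜ[K] β.symm (b i)) ⊗ₜ[K]
        (b.coord i ⊗ₜ[K] (1 : H)))
    = ∑ i, ((Coalgebra.counit : Module.Dual K H) ⊗ₜ[K]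
        ((μ.toLinearMap ∘ₗ α.symm.toLinearMap ∘ₗ ν.symm.toLinearMap ∘ₗ α.toLinearMap ∘ₗ
          β.symm.toLinearMap ∘ₗ ν.toLinearMap ∘ₗ μ.symm.toLinearMap) (b i))) ⊗ₜ[K]
        (b.coord i ⊗ₜ[K] (1 : H)) := by
  set F := μ.toLinearMap ∘ₗ α.symm.toLinearMap ∘ₗ ν.symm.toLinearMap ∘ₗ α.toLinearMap ∘ₗ
    β.symm.toLinearMap
  have hcanonical := congrArg (TensorProduct.map (DCP.toD2 K ∘ₗ F) (DCP.toD1 K))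
    (b.sum_map_tmul_coord (ν.toLinearMap ∘ₗ μ.symm.toLinearMap))
  simp only [map_sum, map_tmul] at hcanonical ⊢
  simp only [DCP.xiMap_counit_tmul hμ hν, DCP.xiMap_tmul_one hμ hν hγ]
  exact hcanonical.symm

/-- The generalized R-matrix is invariant under the diagonal crossing action. -/
theorem stmt14 (K H : Type) [Field K] [Ring H] [HopfAlgebra K H] [FiniteDimensional K H]
    (Sinv : H →ₗ[K] H)
    (hS1 : Sinv ∘ₗ HopfAlgebra.antipode (R := K) (A := H) = LinearMap.id)
    (hS2 : HopfAlgebra.antipode (R := K) (A := H) ∘ₗ Sinv = LinearMap.id)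
    (α β γ δ μ ν : H ≃ₗ[K] H)
    (hα : DCP.IsHopfAut K α)
    (hβ : DCP.IsHopfAut K β)
    (hγ : DCP.IsHopfAut K γ)
    (hδ : DCP.IsHopfAut K δ)
    (hμ : DCP.IsHopfAut K μ)
    (hν : DCP.IsHopfAut K ν)
    (ι : Type) [Fintype ι] [DecidableEq ι] (b : Module.Basis ι K H) :
    TensorProduct.map (DCP.xiMap K μ ν α) (DCP.xiMap K μ ν γ)
      (∑ i, ((Coalgebra.counit : Module.Dual K H) ⊗ₜ[K] β.symm (b i)) ⊗ₜ[K]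
        (b.coord i ⊗ₜ[K] (1 : H)))
    = ∑ i, ((Coalgebra.counit : Module.Dual K H) ⊗ₜ[K]
        ((μ.toLinearMap ∘ₗ α.symm.toLinearMap ∘ₗ ν.symm.toLinearMap ∘ₗ α.toLinearMap ∘ₗ
          β.symm.toLinearMap ∘ₗ ν.toLinearMap ∘ₗ μ.symm.toLinearMap) (b i))) ⊗ₜ[K]
        (b.coord i ⊗ₜ[K] (1 : H)) :=
  stmt14_general K H α β γ μ ν hγ hμ hν ι b
end
end

section
/- Let H be a group and KH its group algebra with standard Hopf structure. For group elements α, β, γ acting as Hopf automorphisms by conjugation, the diagonal crossed product K(H) ⋈ KH_(α,β) of the function algebra (with finite support, for H infinite) and the group algebra has multiplication (δ_p ⋈ g)(δ_q ⋈ h) = δ_p δ_{βgβ⁻¹ q αg⁻¹α⁻¹} ⋈ gh, where δ_p δ_r = [p = r] δ_p. This multiplication is associative with unit (Σ_p δ_p) ⋈ e in the multiplier sense; in particular for finite H it is a unital associative algebra. -/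
/-!
On basis elements, `(δ_p ⋈ g)(δ_q ⋈ h) = [p = g • q] δ_p ⋈ gh`, where `g • q = (βgβ⁻¹) q (αgα⁻¹)⁻¹`
is a left action of `H` on itself. Both bracketings of a triple product `δ_p ⋈ g, δ_q ⋈ h, δ_r ⋈ k`
are `δ_p ⋈ ghk` exactly when `p = g • q` and `q = h • r`: for the left bracketing the second
condition appears as `p = (gh) • r`, which is equivalent because `g •` is injective.
Since `1 •` is the identity and each `g •` is a bijection, `Σ_p δ_p ⋈ 1` is a two-sided unit.
-/

open TensorProduct LinearMap


/-- The diagonal crossed product multiplication on `K(H) ⋈ KH_(α,β)` for a group `H`. -/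
noncomputable def dp {K H : Type} [Field K] [Group H] [DecidableEq H] (α β : H)
    (x y : (H × H) →₀ K) : (H × H) →₀ K :=
  x.sum fun pg c => y.sum fun qh d =>
    if pg.1 = β * pg.2 * β⁻¹ * qh.1 * α * pg.2⁻¹ * α⁻¹ then
      Finsupp.single (pg.1, pg.2 * qh.2) (c * d)
    else 0

section TwistedConj

variable {H : Type} [Group H] (α β : H)

def twistedConj (g q : H) : H := β * g * β⁻¹ * q * α * g⁻¹ * α⁻¹

@[simp]
lemma twistedConj_one (q : H) : twistedConj α β 1 q = q := by
  simp [twistedConj]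

lemma twistedConj_mul (g h q : H) :
    twistedConj α β (g * h) q = twistedConj α β g (twistedConj α β h q) := by
  simp only [twistedConj]; group

lemma twistedConj_injective (g : H) : Function.Injective (twistedConj α β g) := by
  intro q q' hq
  simpa [twistedConj] using hq

lemma eq_twistedConj_iff (g p q : H) :
    p = twistedConj α β g q ↔ q = twistedConj α β g⁻¹ p := by
  constructor <;> rintro rfl <;> rw [← twistedConj_mul] <;> simp

end TwistedConj

section CrossedProduct

variable {K H : Type} [Field K] [Group H] [DecidableEq H] (α β : H)

lemma dp_add_left (x x' y : (H × H) →₀ K) :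
    dp α β (x + x') y = dp α β x y + dp α β x' y := by
  unfold dp
  apply Finsupp.sum_add_index <;> intros <;> simp [add_mul, Finsupp.single_add,
    apply_ite₂ (· + ·), ← Finsupp.sum_add]

lemma dp_add_right (x y y' : (H × H) →₀ K) :
    dp α β x (y + y') = dp α β x y + dp α β x y' := by
  unfold dp
  rw [← Finsupp.sum_add]
  refine Finsupp.sum_congr fun pg _ => ?_
  apply Finsupp.sum_add_index <;> intros <;> simp [mul_add, Finsupp.single_add,
    apply_ite₂ (· + ·)]

noncomputable def dpLeft (x : (H × H) →₀ K) : ((H × H) →₀ K) →+ ((H × H) →₀ K) :=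
  AddMonoidHom.mk' (dp α β x) (dp_add_right α β x)

noncomputable def dpRight (y : (H × H) →₀ K) : ((H × H) →₀ K) →+ ((H × H) →₀ K) :=
  AddMonoidHom.mk' (dp α β · y) (dp_add_left α β · · y)

@[simp]
lemma dp_zero_left (y : (H × H) →₀ K) : dp α β 0 y = 0 :=
  map_zero (dpRight α β y)

@[simp]
lemma dp_zero_right (x : (H × H) →₀ K) : dp α β x 0 = 0 :=
  map_zero (dpLeft α β x)

lemma dp_sum_left {ι : Type*} (s : Finset ι) (f : ι → (H × H) →₀ K) (y : (H × H) →₀ K) :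
    dp α β (∑ i ∈ s, f i) y = ∑ i ∈ s, dp α β (f i) y :=
  map_sum (dpRight α β y) f s

lemma dp_sum_right {ι : Type*} (s : Finset ι) (f : ι → (H × H) →₀ K) (x : (H × H) →₀ K) :
    dp α β x (∑ i ∈ s, f i) = ∑ i ∈ s, dp α β x (f i) :=
  map_sum (dpLeft α β x) f s

lemma dp_single_single (p g q h : H) (c d : K) :
    dp α β (Finsupp.single (p, g) c) (Finsupp.single (q, h) d) =
      if p = twistedConj α β g q then Finsupp.single (p, g * h) (c * d) else 0 := by
  simp [dp, twistedConj]

lemma dp_assoc_single (p g q h r k : H) (c d e : K) :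
    dp α β (dp α β (Finsupp.single (p, g) c) (Finsupp.single (q, h) d)) (Finsupp.single (r, k) e) =
      dp α β (Finsupp.single (p, g) c) (dp α β (Finsupp.single (q, h) d) (Finsupp.single (r, k) e)) := by
  have hcond : (p = twistedConj α β g q ∧ p = twistedConj α β (g * h) r) ↔
      (q = twistedConj α β h r ∧ p = twistedConj α β g q) := by
    rw [twistedConj_mul]
    constructor
    · rintro ⟨rfl, hr⟩
      exact ⟨twistedConj_injective α β g hr, rfl⟩
    · rintro ⟨rfl, rfl⟩
      exact ⟨rfl, rfl⟩
  simp only [dp_single_single, apply_ite (dp α β · (Finsupp.single (r, k) e)),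
    apply_ite (dp α β _), dp_zero_left, dp_zero_right, ← ite_and, hcond, mul_assoc]

lemma dp_assoc (x y z : (H × H) →₀ K) :
    dp α β (dp α β x y) z = dp α β x (dp α β y z) := by
  induction x using Finsupp.induction_linear with
  | zero => simp
  | add x x' hx hx' => simp only [dp_add_left, hx, hx']
  | single pg c =>
  induction y using Finsupp.induction_linear with
  | zero => simp
  | add y y' hy hy' => simp only [dp_add_left, dp_add_right, hy, hy']
  | single qh d =>
  induction z using Finsupp.induction_linear with
  | zero => simp
  | add z z' hz hz' => simp only [dp_add_right, hz, hz']
  | single rk e => exact dp_assoc_single α β _ _ _ _ _ _ c d e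

lemma dp_unit_left [Fintype H] (x : (H × H) →₀ K) :
    dp α β (∑ p, Finsupp.single (p, (1 : H)) (1 : K)) x = x := by
  induction x using Finsupp.induction_linear with
  | zero => simp
  | add x x' hx hx' => rw [dp_add_right, hx, hx']
  | single qh d =>
    obtain ⟨q, h⟩ := qh
    simp [dp_sum_left, dp_single_single]

lemma dp_unit_right [Fintype H] (x : (H × H) →₀ K) :
    dp α β x (∑ p, Finsupp.single (p, (1 : H)) (1 : K)) = x := by
  induction x using Finsupp.induction_linear with
  | zero => simp
  | add x x' hx hx' => rw [dp_add_left, hx, hx']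
  | single pg c =>
    obtain ⟨p, g⟩ := pg
    simp only [dp_sum_right, dp_single_single, eq_twistedConj_iff α β g p, mul_one]
    simp

end CrossedProduct

/-- The multiplication `(δ_p ⋈ g)(δ_q ⋈ h) = δ_p δ_{βgβ⁻¹ q αg⁻¹α⁻¹} ⋈ gh` is associative,
and for finite `H` it has unit `(Σ_p δ_p) ⋈ e`. -/
theorem stmt18 (K H : Type) [Field K] [Group H] [DecidableEq H] (α β : H) :
    (∀ x y z : (H × H) →₀ K, dp α β (dp α β x y) z = dp α β x (dp α β y z)) ∧
    (∀ (inst : Fintype H) (x : (H × H) →₀ K),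
      dp α β (∑ p ∈ @Finset.univ H inst, Finsupp.single (p, (1 : H)) (1 : K)) x = x ∧
      dp α β x (∑ p ∈ @Finset.univ H inst, Finsupp.single (p, (1 : H)) (1 : K)) = x) :=
  ⟨dp_assoc α β, fun _ x => ⟨dp_unit_left α β x, dp_unit_right α β x⟩⟩
end
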